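/- arXiv:2512.24409 — 2 statements merged into one kernel-verified Lean document; each statement's English description precedes it below -/
import Mathlib

section
/- Let h : ℝ² → ℝ² be a C¹ diffeomorphism whose derivative at every point x has lower-triangular form Dh(x) = [[χ₁₁(x), 0], [χ₁₂(x), χ₂₂(x)]], with sup_x |χ₂₂(x)|/|χ₁₁(x)| < 1 and sup_x |χ₁₂(x)|/|χ₁₁(x)| < ∞. Then there exists α > 0 and κ ∈ (0,1) such that the cone C_α = {(x₁,x₂) : |x₂| ≤ α|x₁|} satisfies Dh(x)(C_α) ⊂ C_{κα} for every x ∈ ℝ². -/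
/-!
For `|v₂| ≤ α |v₁|` the second component of `Dh(x) v` is bounded by
`|χ₁₂| |v₁| + |χ₂₂| |v₂| ≤ (M + s α) |χ₁₁ v₁|`, where `s` and `M` bound the ratios
`|χ₂₂|/|χ₁₁|` and `|χ₁₂|/|χ₁₁|`. Since `s < 1`, the off-diagonal term `M` is absorbed
by taking the cone wide enough: `M + s α ≤ κ α` for `κ = (1 + s)/2` and `α` large.
-/

theorem abs_lowerTriangular_apply_le {a b c s M α v₁ v₂ : ℝ} (hs : 0 ≤ s)
    (hb : |b| ≤ M * |a|) (hc : |c| ≤ s * |a|) (hv : |v₂| ≤ α * |v₁|) :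
    |b * v₁ + c * v₂| ≤ (M + s * α) * |a * v₁| :=
  calc |b * v₁ + c * v₂|
      ≤ |b| * |v₁| + |c| * |v₂| := by
        simpa only [abs_mul] using abs_add_le (b * v₁) (c * v₂)
    _ ≤ M * |a| * |v₁| + s * |a| * (α * |v₁|) := by gcongr
    _ = (M + s * α) * |a * v₁| := by rw [abs_mul]; ring

/-- `α = (2|M| + 1)/(1 - s)` makes `(κ - s) α = |M| + 1/2` for `κ = (1 + s)/2`. -/
theorem exists_cone_contraction_constants {s : ℝ} (hs₀ : 0 ≤ s) (hs₁ : s < 1) (M : ℝ) :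
    ∃ α : ℝ, 0 < α ∧ ∃ κ : ℝ, 0 < κ ∧ κ < 1 ∧ M + s * α ≤ κ * α := by
  have hgap : 0 < 1 - s := by linarith
  refine ⟨(2 * |M| + 1) / (1 - s), by positivity, (1 + s) / 2, by linarith, by linarith, ?_⟩
  have hwidth : ((1 + s) / 2 - s) * ((2 * |M| + 1) / (1 - s)) = |M| + 1 / 2 := by
    field_simp
    ring
  nlinarith [le_abs_self M]

theorem stmt_1_general (χ11 χ12 χ22 : ℝ × ℝ → ℝ)
    (s : ℝ) (hs : s < 1) (hχ22 : ∀ x, |χ22 x| ≤ s * |χ11 x|)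
    (Mb : ℝ) (hχ12 : ∀ x, |χ12 x| ≤ Mb * |χ11 x|) :
    ∃ α : ℝ, 0 < α ∧ ∃ κ : ℝ, 0 < κ ∧ κ < 1 ∧
      ∀ x v : ℝ × ℝ, |v.2| ≤ α * |v.1| →
        |χ12 x * v.1 + χ22 x * v.2| ≤ (κ * α) * |χ11 x * v.1| := by
  obtain ⟨α, hα, κ, hκ₀, hκ₁, hκα⟩ :=
    exists_cone_contraction_constants (le_max_right s 0) (max_lt hs one_pos) Mb
  refine ⟨α, hα, κ, hκ₀, hκ₁, fun x v hv => ?_⟩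
  have hχ22' : |χ22 x| ≤ max s 0 * |χ11 x| :=
    (hχ22 x).trans (by gcongr; exact le_max_left s 0)
  calc |χ12 x * v.1 + χ22 x * v.2|
      ≤ (Mb + max s 0 * α) * |χ11 x * v.1| :=
        abs_lowerTriangular_apply_le (le_max_right s 0) (hχ12 x) hχ22' hv
    _ ≤ (κ * α) * |χ11 x * v.1| := by gcongr

/-- If the derivative of a C¹ diffeomorphism `h : ℝ² → ℝ²` has the
lower-triangular form `Dh(x) = [[χ₁₁ x, 0], [χ₁₂ x, χ₂₂ x]]` with
`sup |χ₂₂|/|χ₁₁| < 1` and `sup |χ₁₂|/|χ₁₁| < ∞`, then there exist `α > 0` and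
`κ ∈ (0,1)` such that the cone `C_α = {(x₁,x₂) : |x₂| ≤ α |x₁|}` satisfies
`Dh(x)(C_α) ⊆ C_{κα}` for every `x`. -/
theorem stmt_1 (χ11 χ12 χ22 : ℝ × ℝ → ℝ)
    (h : ℝ × ℝ → ℝ × ℝ) (hdiff : Function.Bijective h)
    (s : ℝ) (hs : s < 1) (hχ22 : ∀ x, |χ22 x| ≤ s * |χ11 x|)
    (Mb : ℝ) (hχ12 : ∀ x, |χ12 x| ≤ Mb * |χ11 x|) :
    ∃ α : ℝ, 0 < α ∧ ∃ κ : ℝ, 0 < κ ∧ κ < 1 ∧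
      ∀ x v : ℝ × ℝ, |v.2| ≤ α * |v.1| →
        |χ12 x * v.1 + χ22 x * v.2| ≤ (κ * α) * |χ11 x * v.1| :=
  stmt_1_general χ11 χ12 χ22 s hs hχ22 Mb hχ12
end

section
/- Let f be a C^{1} diffeomorphism of a compact manifold admitting two dominated splittings TM = E₁ ⊕_{≻} F₁ = E₂ ⊕_{≻} F₂. If dim E₁ = dim E₂, then E₁ = E₂ and F₁ = F₂ (uniqueness of dominated splittings of a given index). If dim E₁ < dim E₂, then E₁ ⊂ E₂. -/
/-!
Domination is used only through its asymptotic consequence: along the forward cocycle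
`Dfⁿ_x`, every vector of `F` grows like `o(Dfⁿ_x v)` for each nonzero `v ∈ E`, and along the
backward cocycle `(Dfⁿ_{f⁻ⁿx})⁻¹` the roles of `E` and `F` are exchanged.
If `dim E₁ ≤ dim E₂` and `w ∈ F₂ \ F₁`, a dimension count gives `0 ≠ e ∈ E₂ ∩ (F₁ + ℝw)`.
Since `w` has a nonzero `E₁`-component, every vector of `F₁ + ℝw` grows like `O(Dfⁿ_x w)`,
which contradicts `Dfⁿ_x w = o(Dfⁿ_x e)`. Hence `F₂ ⊆ F₁`, and the same argument along the
backward cocycle gives `E₁ ⊆ E₂`.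
-/

open Filter Topology Asymptotics Module Function

theorem Submodule.not_disjoint_sup_span_singleton_of_finrank_le {K V : Type*}
    [DivisionRing K] [AddCommGroup V] [Module K V] [FiniteDimensional K V]
    {E F E' : Submodule K V} (hEF : IsCompl E F)
    (hdim : finrank K E ≤ finrank K E') {w : V} (hw : w ∉ F) : ¬Disjoint E' (F ⊔ K ∙ w) := by
  intro hdisj
  have h₁ := finrank_add_finrank_le_of_disjoint hdisj
  have h₂ := finrank_add_eq_of_isCompl hEF
  rw [finrank_sup_span_singleton hw] at h₁
  omega

section Domination

variable {ι V W : Type*} [NormedAddCommGroup V] [NormedSpace ℝ V]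
  [NormedAddCommGroup W] [NormedSpace ℝ W]

def DominatesWith (A : V →ₗ[ℝ] W) (ε : ℝ) (E F : Submodule ℝ V) : Prop :=
  ∀ v ∈ E, ∀ w ∈ F, ‖A w‖ * ‖v‖ ≤ ε * (‖w‖ * ‖A v‖)

def DominatesAlong (l : Filter ι) (T : ι → V →ₗ[ℝ] W) (E F : Submodule ℝ V) : Prop :=
  ∀ v ∈ E, v ≠ 0 → ∀ w ∈ F, (fun i => T i w) =o[l] fun i => T i v

theorem DominatesWith.symm {A : V ≃ₗ[ℝ] W} {ε : ℝ} {E F : Submodule ℝ V}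
    (h : DominatesWith (A : V →ₗ[ℝ] W) ε E F) :
    DominatesWith (A.symm : W →ₗ[ℝ] V) ε (F.map (A : V →ₗ[ℝ] W)) (E.map (A : V →ₗ[ℝ] W)) := by
  rintro _ ⟨w, hw, rfl⟩ _ ⟨v, hv, rfl⟩
  have := h v hv w hw
  simp only [LinearEquiv.coe_coe, LinearEquiv.symm_apply_apply] at this ⊢
  linarith

theorem DominatesAlong.of_dominatesWith {l : Filter ι} {T : ι → V →ₗ[ℝ] W} {ε : ι → ℝ}
    {E F : Submodule ℝ V} (hε : Tendsto ε l (𝓝 0))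
    (h : ∀ᶠ i in l, DominatesWith (T i) (ε i) E F) : DominatesAlong l T E F := by
  intro v hv hv0 w hw
  have hbound : (fun i => T i w) =O[l] fun i => ε i • T i v := by
    refine .of_bound (‖w‖ / ‖v‖) (h.mono fun i hi => ?_)
    rw [norm_smul, Real.norm_eq_abs, div_mul_eq_mul_div, le_div_iff₀ (norm_pos_iff.2 hv0)]
    calc ‖T i w‖ * ‖v‖ ≤ ε i * (‖w‖ * ‖T i v‖) := hi v hv w hw
      _ ≤ |ε i| * (‖w‖ * ‖T i v‖) := by gcongr; exact le_abs_self _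
      _ = ‖w‖ * (|ε i| * ‖T i v‖) := by ring
  have hsmall : (fun i => ε i • T i v) =o[l] fun i => T i v := by
    simpa using ((isLittleO_one_iff ℝ).2 hε).smul_isBigO (isBigO_refl (fun i => T i v) l)
  exact hbound.trans_isLittleO hsmall

theorem DominatesAlong.of_dominatesWith_symm {l : Filter ι} {A : ι → V ≃ₗ[ℝ] W} {ε : ι → ℝ}
    {E' F' : ι → Submodule ℝ V} {E F : Submodule ℝ W}
    (hE : ∀ i, (E' i).map (A i : V →ₗ[ℝ] W) = E) (hF : ∀ i, (F' i).map (A i : V →ₗ[ℝ] W) = F)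
    (hε : Tendsto ε l (𝓝 0)) (h : ∀ᶠ i in l, DominatesWith (A i : V →ₗ[ℝ] W) (ε i) (E' i) (F' i)) :
    DominatesAlong l (fun i => ((A i).symm : W →ₗ[ℝ] V)) F E :=
  .of_dominatesWith hε <| h.mono fun i hi => hE i ▸ hF i ▸ hi.symm

variable {l : Filter ι} {T : ι → V →ₗ[ℝ] W} {E F : Submodule ℝ V}

theorem DominatesAlong.isLittleO_of_notMem (h : DominatesAlong l T E F) (hEF : E ⊔ F = ⊤)
    {w b : V} (hw : w ∉ F) (hb : b ∈ F) : (fun i => T i b) =o[l] fun i => T i w := by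
  obtain ⟨a, ha, b₀, hb₀, rfl⟩ := Submodule.mem_sup.1 (hEF ▸ Submodule.mem_top : w ∈ E ⊔ F)
  have ha0 : a ≠ 0 := by rintro rfl; simp [hb₀] at hw
  have hcomp : (fun i => T i a) =O[l] fun i => T i (a + b₀) := by
    simpa [add_comm] using (h a ha ha0 b₀ hb₀).right_isBigO_add
  exact (h a ha ha0 b hb).trans_isBigO hcomp

end Domination

section Core

variable {ι V W : Type*} [NormedAddCommGroup V] [NormedSpace ℝ V] [FiniteDimensional ℝ V]
  [NormedAddCommGroup W] [NormedSpace ℝ W] {l : Filter ι} [l.NeBot]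

theorem DominatesAlong.le_of_finrank_le {T : ι → V →ₗ[ℝ] W} (hT : ∀ i, Injective (T i))
    {E₁ F₁ E₂ F₂ : Submodule ℝ V} (h₁ : IsCompl E₁ F₁) (hd₁ : DominatesAlong l T E₁ F₁)
    (hd₂ : DominatesAlong l T E₂ F₂) (hdim : finrank ℝ E₁ ≤ finrank ℝ E₂) : F₂ ≤ F₁ := by
  intro w hw
  by_contra hw₁
  obtain ⟨e, he, hew, he0⟩ : ∃ e ∈ E₂, e ∈ F₁ ⊔ ℝ ∙ w ∧ e ≠ 0 := by
    simpa [Submodule.disjoint_def] using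
      Submodule.not_disjoint_sup_span_singleton_of_finrank_le h₁ hdim hw₁
  obtain ⟨b, hb, _, hs, rfl⟩ := Submodule.mem_sup.1 hew
  obtain ⟨t, rfl⟩ := Submodule.mem_span_singleton.1 hs
  have hbig : (fun i => T i (b + t • w)) =O[l] fun i => T i w := by
    simpa using (hd₁.isLittleO_of_notMem h₁.sup_eq_top hw₁ hb).isBigO.add
      ((isBigO_refl (fun i => T i w) l).const_smul_left t)
  have hw0 : w ≠ 0 := by rintro rfl; exact hw₁ F₁.zero_mem
  exact isLittleO_irrefl (.of_forall fun i => (map_ne_zero_iff _ (hT i)).2 hw0)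
    ((hd₂ _ he he0 w hw).trans_isBigO hbig)

theorem DominatesAlong.le_and_le_of_finrank_le {T S : ι → V →ₗ[ℝ] W}
    (hT : ∀ i, Injective (T i)) (hS : ∀ i, Injective (S i)) {E₁ F₁ E₂ F₂ : Submodule ℝ V}
    (h₁ : IsCompl E₁ F₁) (h₂ : IsCompl E₂ F₂)
    (hT₁ : DominatesAlong l T E₁ F₁) (hT₂ : DominatesAlong l T E₂ F₂)
    (hS₁ : DominatesAlong l S F₁ E₁) (hS₂ : DominatesAlong l S F₂ E₂)
    (hdim : finrank ℝ E₁ ≤ finrank ℝ E₂) : E₁ ≤ E₂ ∧ F₂ ≤ F₁ := by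
  refine ⟨hS₂.le_of_finrank_le hS h₂.symm hS₁ ?_, hT₁.le_of_finrank_le hT h₁ hT₂ hdim⟩
  have := Submodule.finrank_add_eq_of_isCompl h₁
  have := Submodule.finrank_add_eq_of_isCompl h₂
  omega

end Core

section Cocycle

variable {X R V : Type*} [Semiring R] [AddCommGroup V] [Module R V] {f : X → X}
  {Df : X → V ≃ₗ[R] V} {Dfn : ℕ → X → V →ₗ[R] V}

theorem injective_cocycle (h0 : ∀ x, Dfn 0 x = LinearMap.id)
    (hS : ∀ n x, Dfn (n + 1) x = (Df (f^[n] x) : V →ₗ[R] V).comp (Dfn n x)) (n : ℕ) (x : X) :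
    Injective (Dfn n x) := by
  induction n with
  | zero => simpa [h0] using injective_id
  | succ n ih => simpa [hS] using (Df (f^[n] x)).injective.comp ih

theorem map_cocycle_eq (h0 : ∀ x, Dfn 0 x = LinearMap.id)
    (hS : ∀ n x, Dfn (n + 1) x = (Df (f^[n] x) : V →ₗ[R] V).comp (Dfn n x))
    {E : X → Submodule R V} (hE : ∀ x, (E x).map (Df x : V →ₗ[R] V) = E (f x)) (n : ℕ) (x : X) :
    (E x).map (Dfn n x) = E (f^[n] x) := by
  induction n with
  | zero => simp [h0]
  | succ n ih => rw [hS, Submodule.map_comp, ih, hE, iterate_succ_apply']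

end Cocycle

theorem dominatesAlong_cocycle_and_symm {X V : Type*} [NormedAddCommGroup V] [NormedSpace ℝ V]
    {f : X → X} {Dfn : ℕ → X → V →ₗ[ℝ] V} {E F : X → Submodule ℝ V}
    (hE : ∀ n x, (E x).map (Dfn n x) = E (f^[n] x)) (hF : ∀ n x, (F x).map (Dfn n x) = F (f^[n] x))
    {c σ : ℝ} (hσ₀ : 0 ≤ σ) (hσ₁ : σ < 1)
    (hdom : ∀ n, 1 ≤ n → ∀ x, DominatesWith (Dfn n x) (c * σ ^ n) (E x) (F x))
    {x : X} {y : ℕ → X} (hy : ∀ n, f^[n] (y n) = x) {A : ℕ → V ≃ₗ[ℝ] V}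
    (hA : ∀ n, (A n : V →ₗ[ℝ] V) = Dfn n (y n)) :
    DominatesAlong atTop (Dfn · x) (E x) (F x) ∧
      DominatesAlong atTop (fun n => ((A n).symm : V →ₗ[ℝ] V)) (F x) (E x) := by
  have hε : Tendsto (fun n => c * σ ^ n) atTop (𝓝 0) := by
    simpa using (tendsto_pow_atTop_nhds_zero_of_lt_one hσ₀ hσ₁).const_mul c
  have hdom' : ∀ᶠ n in atTop, ∀ x, DominatesWith (Dfn n x) (c * σ ^ n) (E x) (F x) :=
    eventually_atTop.2 ⟨1, hdom⟩
  exact ⟨.of_dominatesWith hε (hdom'.mono fun _ h => h x),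
    .of_dominatesWith_symm (fun n => by rw [hA, hE, hy]) (fun n => by rw [hA, hF, hy]) hε
      (hdom'.mono fun n h => hA n ▸ h (y n))⟩

theorem stmt_10_general
    {X V : Type*} [NormedAddCommGroup V] [InnerProductSpace ℝ V]
    [FiniteDimensional ℝ V]
    (f : X → X) (hf : Function.Bijective f)
    (Df : X → V ≃ₗ[ℝ] V)
    (Dfn : ℕ → X → V →ₗ[ℝ] V)
    (hDfn0 : ∀ x, Dfn 0 x = LinearMap.id)
    (hDfnS : ∀ n x, Dfn (n + 1) x = ((Df (f^[n] x) : V →ₗ[ℝ] V).comp (Dfn n x)))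
    (E1 F1 E2 F2 : X → Submodule ℝ V)
    (hcompl1 : ∀ x, IsCompl (E1 x) (F1 x)) (hcompl2 : ∀ x, IsCompl (E2 x) (F2 x))
    (hinvE1 : ∀ x, (E1 x).map (Df x : V →ₗ[ℝ] V) = E1 (f x))
    (hinvF1 : ∀ x, (F1 x).map (Df x : V →ₗ[ℝ] V) = F1 (f x))
    (hinvE2 : ∀ x, (E2 x).map (Df x : V →ₗ[ℝ] V) = E2 (f x))
    (hinvF2 : ∀ x, (F2 x).map (Df x : V →ₗ[ℝ] V) = F2 (f x))
    (d1 d2 : ℕ)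
    (hd1 : ∀ x, Module.finrank ℝ (E1 x) = d1)
    (hd2 : ∀ x, Module.finrank ℝ (E2 x) = d2)
    (c1 σ1 : ℝ) (hσ1 : 0 < σ1) (hσ1' : σ1 < 1)
    (hdom1 : ∀ n : ℕ, 1 ≤ n → ∀ x, ∀ v ∈ E1 x, ∀ w ∈ F1 x,
      ‖Dfn n x w‖ * ‖v‖ ≤ c1 * σ1 ^ n * (‖w‖ * ‖Dfn n x v‖))
    (c2 σ2 : ℝ) (hσ2 : 0 < σ2) (hσ2' : σ2 < 1)
    (hdom2 : ∀ n : ℕ, 1 ≤ n → ∀ x, ∀ v ∈ E2 x, ∀ w ∈ F2 x,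
      ‖Dfn n x w‖ * ‖v‖ ≤ c2 * σ2 ^ n * (‖w‖ * ‖Dfn n x v‖)) :
    (d1 = d2 → ∀ x, E1 x = E2 x ∧ F1 x = F2 x) ∧
    (d1 < d2 → ∀ x, E1 x ≤ E2 x) := by
  have hinj := injective_cocycle hDfn0 hDfnS
  choose y hy using fun n => hf.2.iterate n
  let A n x : V ≃ₗ[ℝ] V := .ofInjectiveEndo _ (hinj n (y n x))
  have hA n x : (A n x : V →ₗ[ℝ] V) = Dfn n (y n x) := LinearMap.ext fun _ => rfl
  have h₁ x := dominatesAlong_cocycle_and_symm (map_cocycle_eq hDfn0 hDfnS hinvE1)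
    (map_cocycle_eq hDfn0 hDfnS hinvF1) hσ1.le hσ1' hdom1 (hy · x) (hA · x)
  have h₂ x := dominatesAlong_cocycle_and_symm (map_cocycle_eq hDfn0 hDfnS hinvE2)
    (map_cocycle_eq hDfn0 hDfnS hinvF2) hσ2.le hσ2' hdom2 (hy · x) (hA · x)
  have hS n x : Injective ((A n x).symm : V →ₗ[ℝ] V) := (A n x).symm.injective
  have hle x (hd : d1 ≤ d2) : E1 x ≤ E2 x ∧ F2 x ≤ F1 x :=
    DominatesAlong.le_and_le_of_finrank_le (hinj · x) (hS · x) (hcompl1 x) (hcompl2 x)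
      (h₁ x).1 (h₂ x).1 (h₁ x).2 (h₂ x).2 (by rw [hd1, hd2]; exact hd)
  have hge x (hd : d2 ≤ d1) : E2 x ≤ E1 x ∧ F1 x ≤ F2 x :=
    DominatesAlong.le_and_le_of_finrank_le (hinj · x) (hS · x) (hcompl2 x) (hcompl1 x)
      (h₂ x).1 (h₁ x).1 (h₂ x).2 (h₁ x).2 (by rw [hd1, hd2]; exact hd)
  exact ⟨fun hd x => ⟨(hle x hd.le).1.antisymm (hge x hd.ge).1,
    (hge x hd.ge).2.antisymm (hle x hd.le).2⟩, fun hd x => (hle x hd.le).1⟩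

/-- Uniqueness of dominated splittings. If a diffeomorphism (modelled by
an invertible bounded linear cocycle `Df` over `f`) admits two dominated splittings
`TM = E₁ ⊕≻ F₁ = E₂ ⊕≻ F₂` of constant dimensions, then `dim E₁ = dim E₂` implies
`E₁ = E₂` and `F₁ = F₂`, while `dim E₁ < dim E₂` implies `E₁ ⊆ E₂`. -/
theorem stmt_10
    {X V : Type*} [NormedAddCommGroup V] [InnerProductSpace ℝ V]
    [FiniteDimensional ℝ V]
    (f : X → X) (hf : Function.Bijective f)
    (Df : X → V ≃ₗ[ℝ] V)
    (Dfn : ℕ → X → V →ₗ[ℝ] V)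
    (hDfn0 : ∀ x, Dfn 0 x = LinearMap.id)
    (hDfnS : ∀ n x, Dfn (n + 1) x = ((Df (f^[n] x) : V →ₗ[ℝ] V).comp (Dfn n x)))
    (K : ℝ) (hK : ∀ x v, ‖(Df x) v‖ ≤ K * ‖v‖ ∧ ‖v‖ ≤ K * ‖(Df x) v‖)
    (E1 F1 E2 F2 : X → Submodule ℝ V)
    (hcompl1 : ∀ x, IsCompl (E1 x) (F1 x)) (hcompl2 : ∀ x, IsCompl (E2 x) (F2 x))
    (hinvE1 : ∀ x, (E1 x).map (Df x : V →ₗ[ℝ] V) = E1 (f x))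
    (hinvF1 : ∀ x, (F1 x).map (Df x : V →ₗ[ℝ] V) = F1 (f x))
    (hinvE2 : ∀ x, (E2 x).map (Df x : V →ₗ[ℝ] V) = E2 (f x))
    (hinvF2 : ∀ x, (F2 x).map (Df x : V →ₗ[ℝ] V) = F2 (f x))
    (d1 d2 : ℕ)
    (hd1 : ∀ x, Module.finrank ℝ (E1 x) = d1)
    (hd2 : ∀ x, Module.finrank ℝ (E2 x) = d2)
    (c1 σ1 : ℝ) (hc1 : 0 < c1) (hσ1 : 0 < σ1) (hσ1' : σ1 < 1)
    (hdom1 : ∀ n : ℕ, 1 ≤ n → ∀ x, ∀ v ∈ E1 x, ∀ w ∈ F1 x,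
      ‖Dfn n x w‖ * ‖v‖ ≤ c1 * σ1 ^ n * (‖w‖ * ‖Dfn n x v‖))
    (c2 σ2 : ℝ) (hc2 : 0 < c2) (hσ2 : 0 < σ2) (hσ2' : σ2 < 1)
    (hdom2 : ∀ n : ℕ, 1 ≤ n → ∀ x, ∀ v ∈ E2 x, ∀ w ∈ F2 x,
      ‖Dfn n x w‖ * ‖v‖ ≤ c2 * σ2 ^ n * (‖w‖ * ‖Dfn n x v‖)) :
    (d1 = d2 → ∀ x, E1 x = E2 x ∧ F1 x = F2 x) ∧
    (d1 < d2 → ∀ x, E1 x ≤ E2 x) :=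
  stmt_10_general f hf Df Dfn hDfn0 hDfnS E1 F1 E2 F2 hcompl1 hcompl2 hinvE1 hinvF1 hinvE2 hinvF2 d1
    d2 hd1 hd2 c1 σ1 hσ1 hσ1' hdom1 c2 σ2 hσ2 hσ2' hdom2
end
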